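/- Let f be a BN on a finite variable set V such that for every state x the local influence graph IG(f,x) has no even cycle. Then ASTG(f) has exactly one attractor. -/

import Mathlib

/-- A trap set of a directed graph (given by its arc relation `E`):
a nonempty set of vertices with no outgoing arc. -/
def TrapSet {V : Type*} (E : V → V → Prop) (A : Set V) : Prop :=
  A.Nonempty ∧ ∀ x ∈ A, ∀ y, E x y → y ∈ A

/-- An attractor: an inclusion-minimal trap set. -/
def Attractor {V : Type*} (E : V → V → Prop) (A : Set V) : Prop :=
  TrapSet E A ∧ ∀ B ⊆ A, TrapSet E B → B = A

/-- Arc relation of the asynchronous state transition graph of a Boolean network `f`. -/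
def astg {V : Type*} (f : V → (V → Bool) → Bool) (x y : V → Bool) : Prop :=
  ∃ v, y v = f v x ∧ y v ≠ x v ∧ ∀ u, u ≠ v → y u = x u

/-- `f` is an AND-NOT Boolean network: every update function is constant or a
conjunction of literals over pairwise distinct variables. -/
def IsAndNot {V : Type*} [DecidableEq V] (f : V → (V → Bool) → Bool) : Prop :=
  ∀ v, (∃ b, ∀ x, f v x = b) ∨
    ∃ (L : Finset V) (sgn : V → Bool), ∀ x, f v x = decide (∀ u ∈ L, x u = sgn u)

/-- Positive arc `u → v` of the local influence graph of `f` at state `x`. -/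
def localPos {V : Type*} [DecidableEq V] (f : V → (V → Bool) → Bool)
    (x : V → Bool) (u v : V) : Prop :=
  f v (Function.update x u false) = false ∧ f v (Function.update x u true) = true

/-- Negative arc `u → v` of the local influence graph of `f` at state `x`. -/
def localNeg {V : Type*} [DecidableEq V] (f : V → (V → Bool) → Bool)
    (x : V → Bool) (u v : V) : Prop :=
  f v (Function.update x u false) = true ∧ f v (Function.update x u true) = false

/-- Positive arc of the global influence graph of `f`. -/
def igPos {V : Type*} [DecidableEq V] (f : V → (V → Bool) → Bool) (u v : V) : Prop :=
  ∃ x, localPos f x u v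

/-- Negative arc of the global influence graph of `f`. -/
def igNeg {V : Type*} [DecidableEq V] (f : V → (V → Bool) → Bool) (u v : V) : Prop :=
  ∃ x, localNeg f x u v

/-- The data of a cycle in a signed directed graph: `n ≥ 1` pairwise distinct vertices
`vtx 0, …, vtx (n-1)` together with a sign `sgn i` for the arc `vtx i → vtx ((i+1) % n)`
(`true` = positive, `false` = negative). -/
structure CycleData (V : Type*) where
  n : ℕ
  npos : 0 < n
  vtx : ℕ → V
  sgn : ℕ → Bool
  inj : ∀ i, i < n → ∀ j, j < n → vtx i = vtx j → i = j

/-- `C` is a cycle of the signed directed graph with positive arcs `P` and negative arcs `N`. -/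
def IsCycleIn {V : Type*} (C : CycleData V) (P N : V → V → Prop) : Prop :=
  ∀ i, i < C.n →
    if C.sgn i then P (C.vtx i) (C.vtx ((i + 1) % C.n))
    else N (C.vtx i) (C.vtx ((i + 1) % C.n))

/-- `v` is a vertex of the cycle `C`. -/
def InCycle {V : Type*} (C : CycleData V) (v : V) : Prop :=
  ∃ i, i < C.n ∧ C.vtx i = v

/-- The positive arc `u → v` is an arc of the cycle `C`. -/
def PosArcOf {V : Type*} (C : CycleData V) (u v : V) : Prop :=
  ∃ i, i < C.n ∧ C.vtx i = u ∧ C.vtx ((i + 1) % C.n) = v ∧ C.sgn i = true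

/-- The negative arc `u → v` is an arc of the cycle `C`. -/
def NegArcOf {V : Type*} (C : CycleData V) (u v : V) : Prop :=
  ∃ i, i < C.n ∧ C.vtx i = u ∧ C.vtx ((i + 1) % C.n) = v ∧ C.sgn i = false

/-- The cycle is even: it has an even number of negative arcs. -/
def IsEven {V : Type*} (C : CycleData V) : Prop :=
  Even (((Finset.range C.n).filter (fun i => C.sgn i = false)).card)

/-- `(u, v1, v2)` is a delocalizing triple of the cycle `C` in the signed graph `(P, N)`. -/
def DelocTriple {V : Type*} (C : CycleData V) (P N : V → V → Prop) (u v1 v2 : V) : Prop :=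
  InCycle C v1 ∧ InCycle C v2 ∧ v1 ≠ v2 ∧ P u v1 ∧ N u v2 ∧
    ¬ PosArcOf C u v1 ∧ ¬ NegArcOf C u v2

/-- The cycle `C` is strong in `(P, N)`: it admits no delocalizing triple. -/
def IsStrong {V : Type*} (C : CycleData V) (P N : V → V → Prop) : Prop :=
  ∀ u v1 v2, ¬ DelocTriple C P N u v1 v2

/-- All-positive path from `k` through the intermediate vertices `is` to the endpoint. -/
def PosPath {V : Type*} (P : V → V → Prop) : V → List V → V → Prop
  | k, [], t => P k t
  | k, j :: js, t => P k j ∧ PosPath P j js t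

/-- Path from `k` through intermediate vertices `js` to the endpoint whose arcs are all
positive except the last one, which is negative. -/
def PosNegPath {V : Type*} (P N : V → V → Prop) : V → List V → V → Prop
  | k, [], u => N k u
  | k, j :: js, u => P k j ∧ PosNegPath P N j js u

/-- `k` witnesses the inconsistency of the cycle `C` in the signed graph `(P, N)`. -/
def WitnessesIncons {V : Type*} (P N : V → V → Prop) (C : CycleData V) (k : V) : Prop :=
  ∃ (t u : V) (is js : List V),
    PosPath P k is t ∧ PosNegPath P N k js u ∧
    InCycle C t ∧ InCycle C u ∧ t ≠ u ∧
    ¬ PosArcOf C k t ∧ ¬ NegArcOf C k u ∧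
    ∀ j ∈ js, ∃! p : V × Bool, cond p.2 (P p.1 j) (N p.1 j)

/-- The cycle `C` is inconsistent in the signed graph `(P, N)`. -/
def Inconsistent {V : Type*} (P N : V → V → Prop) (C : CycleData V) : Prop :=
  ∃ k, WitnessesIncons P N C k

/-- The cycle `C` is consistent in the signed graph `(P, N)`. -/
def Consistent {V : Type*} (P N : V → V → Prop) (C : CycleData V) : Prop :=
  ¬ Inconsistent P N C

/-- `J` dominates the signed directed graph `(P, N)`. -/
def Dominates {V : Type*} (J : Set V) (P N : V → V → Prop) : Prop :=
  (∀ C : CycleData V, IsCycleIn C P N → IsEven C → Consistent P N C →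
    ∃ v ∈ J, InCycle C v) ∧
  (∀ C : CycleData V, IsCycleIn C P N → IsEven C → IsStrong C P N → Inconsistent P N C →
    (∃ v ∈ J, InCycle C v) ∨ ∃ k ∈ J, WitnessesIncons P N C k)

open Classical in
/-- The one-step percolation of a Boolean network: substitute the values of all
constant update functions into every update function. -/
noncomputable def percolate {V : Type*} (f : V → (V → Bool) → Bool) :
    V → (V → Bool) → Bool :=
  fun v x => f v (fun u => if h : ∃ b : Bool, ∀ y, f u y = b then h.choose else x u)


/-!
Attractors exist because the state space is finite, and two attractors that meet coincide, so it
suffices that any two trap sets meet. If trap sets `A` and `B` were disjoint, pick `x ∈ A` and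
`y ∈ B` at minimal Hamming distance: every variable on which they differ is fixed at both `x` and
`y`, since otherwise one of them could step towards the other inside its trap set. Now induct on
the distance. Either some differing variable `u` can be reset to `x u` in `y` without unfixing the
others, which gives a closer such pair, or every differing `u` has a differing successor `w` whose
update function at `y` reacts to flipping `u`. Following successors closes a cycle of `IG(f, y)`
in which the arc `u → w` is positive iff `y u = y w`; its negative arcs are the sign changes of
`y` around the cycle, so it is even.
-/

open Function Finset

theorem Function.exists_mem_periodicPts {α : Type*} [Finite α] [Nonempty α] (g : α → α) :
    ∃ p, p ∈ periodicPts g := by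
  obtain ⟨x⟩ := ‹Nonempty α›
  obtain ⟨m, n, heq, hne⟩ : ∃ m n, g^[m] x = g^[n] x ∧ m ≠ n := by
    simpa [Injective] using not_injective_infinite_finite (g^[·] x)
  wlog hlt : m < n generalizing m n
  · exact this n m heq.symm hne.symm (by omega)
  refine ⟨g^[m] x, mk_mem_periodicPts (n := n - m) (by omega) ?_⟩
  rw [IsPeriodicPt, IsFixedPt, ← iterate_add_apply, Nat.sub_add_cancel hlt.le, heq]

theorem even_card_filter_ne_succ {m : ℕ} (c : ℕ → Bool) (hc : c m = c 0) :
    Even #{i ∈ range m | c i ≠ c (i + 1)} := by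
  let t : ℕ → ZMod 2 := fun i => if c i then 1 else 0
  have hterm : ∀ i, (if c i ≠ c (i + 1) then 1 else 0 : ZMod 2) = t i - t (i + 1) := by
    intro i
    simp only [t]
    cases c i <;> cases c (i + 1) <;> decide
  rw [← ZMod.natCast_eq_zero_iff_even, natCast_card_filter]
  simp only [hterm, sum_range_sub', t, hc, sub_self]

theorem exists_even_cycle_of_balanced_map {V W : Type*} [Finite W] [Nonempty W]
    {P N : V → V → Prop} (e : W → V) (he : Injective e) (g : W → W) (b : V → Bool)
    (harc : ∀ w, if b (e w) = b (e (g w)) then P (e w) (e (g w)) else N (e w) (e (g w))) :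
    ∃ C : CycleData V, IsCycleIn C P N ∧ IsEven C := by
  obtain ⟨p, hp⟩ := exists_mem_periodicPts g
  let vtx : ℕ → V := fun k => e (g^[k] p)
  have hsucc : ∀ k, vtx ((k + 1) % minimalPeriod g p) = e (g (g^[k] p)) := by
    intro k
    simp only [vtx, (isPeriodicPt_minimalPeriod g p).iterate_mod_apply, iterate_succ_apply']
  let C : CycleData V :=
    { n := minimalPeriod g p
      npos := minimalPeriod_pos_of_mem_periodicPts hp
      vtx := vtx
      sgn := fun k => decide (b (vtx k) = b (vtx (k + 1)))
      inj := fun i hi j hj h => iterate_injOn_Iio_minimalPeriod hi hj (he h) }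
  refine ⟨C, fun i _ => ?_, ?_⟩
  · simp only [C, hsucc, vtx, iterate_succ_apply', decide_eq_true_eq]
    exact harc _
  · have := even_card_filter_ne_succ (m := minimalPeriod g p) (fun k => b (vtx k))
      (by simp only [vtx, (isPeriodicPt_minimalPeriod g p).eq, iterate_zero_apply])
    simpa [IsEven, C] using this

section Attractors

variable {α : Type*}

theorem exists_attractor [Finite α] [Nonempty α] (E : α → α → Prop) : ∃ A, Attractor E A := by
  obtain ⟨A, hA, hmin⟩ := Set.exists_min_image {A : Set α | TrapSet E A} Set.ncard
    (Set.toFinite _) ⟨Set.univ, Set.univ_nonempty, fun _ _ _ _ => trivial⟩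
  exact ⟨A, hA, fun B hBA hB => Set.eq_of_subset_of_ncard_le hBA (hmin B hB)⟩

theorem Attractor.eq_of_inter_nonempty {E : α → α → Prop} {A B : Set α} (hA : Attractor E A) (hB : Attractor E B)
    (hAB : (A ∩ B).Nonempty) : A = B := by
  have htrap : TrapSet E (A ∩ B) :=
    ⟨hAB, fun x hx y hxy => ⟨hA.1.2 x hx.1 y hxy, hB.1.2 x hx.2 y hxy⟩⟩
  exact (hA.2 _ Set.inter_subset_left htrap).symm.trans (hB.2 _ Set.inter_subset_right htrap)

end Attractors

theorem hammingDist_update_lt {ι : Type*} [Fintype ι] [DecidableEq ι] {β : ι → Type*}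
    [∀ i, DecidableEq (β i)] {x y : ∀ i, β i} {u : ι} (hu : x u ≠ y u) :
    hammingDist (update x u (y u)) y < hammingDist x y := by
  refine card_lt_card ⟨fun v hv => ?_, fun hsub => ?_⟩
  · have hvu : v ≠ u := by rintro rfl; simp at hv
    simpa [hvu] using hv
  · have := hsub (by simpa using hu)
    simp at this

section BooleanNetwork

variable {V : Type*} [DecidableEq V] {f : V → (V → Bool) → Bool}

theorem TrapSet.update_mem {A : Set (V → Bool)} (hA : TrapSet (astg f) A) {x : V → Bool}
    (hx : x ∈ A) (v : V) : update x v (f v x) ∈ A := by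
  by_cases hfix : f v x = x v
  · rwa [hfix, update_eq_self]
  · exact hA.2 x hx _ ⟨v, update_self .., by rwa [update_self], fun u hu => update_of_ne hu ..⟩

theorem localArc_of_flip {y : V → Bool} {u w : V} (hfix : f w y = y w)
    (hflip : f w (update y u (!y u)) = !y w) :
    if y u = y w then localPos f y u w else localNeg f y u w := by
  have hstay : f w (update y u (y u)) = y w := by rwa [update_eq_self]
  revert hstay hflip
  cases y u <;> cases y w <;> simp only [localPos, localNeg] <;> tauto

variable [Fintype V]

theorem exists_fixed_on_diff_of_disjoint {A B : Set (V → Bool)} (hA : TrapSet (astg f) A)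
    (hB : TrapSet (astg f) B) (hAB : Disjoint A B) :
    ∃ x ∈ A, ∃ y ∈ B, x ≠ y ∧ ∀ v, x v ≠ y v → f v x = x v ∧ f v y = y v := by
  obtain ⟨⟨x, y⟩, ⟨hx, hy⟩, hmin⟩ := Set.exists_min_image (A ×ˢ B)
    (fun p => hammingDist p.1 p.2) (Set.toFinite _) (hA.1.prod hB.1)
  dsimp only at hx hy hmin
  refine ⟨x, hx, y, hy, hAB.ne_of_mem hx hy, fun v hv => ⟨?_, ?_⟩⟩
  · by_contra hfv
    have hfvy : f v x = y v := (Bool.eq_not.mpr hfv).trans (Bool.eq_not.mpr (Ne.symm hv)).symm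
    have := hmin (update x v (y v), y) ⟨by rw [← hfvy]; exact hA.update_mem hx v, hy⟩
    exact (hammingDist_update_lt hv).not_ge this
  · by_contra hfv
    have hfvx : f v y = x v := (Bool.eq_not.mpr hfv).trans (Bool.eq_not.mpr hv).symm
    have := hmin (x, update y v (x v)) ⟨hx, by rw [← hfvx]; exact hB.update_mem hy v⟩
    rw [hammingDist_comm x, hammingDist_comm x] at this
    exact (hammingDist_update_lt (Ne.symm hv)).not_ge this

theorem exists_even_localCycle_of_fixed_on_diff {x y : V → Bool} (hxy : x ≠ y)
    (hfix : ∀ v, x v ≠ y v → f v x = x v ∧ f v y = y v) :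
    ∃ z, ∃ C : CycleData V, IsCycleIn C (localPos f z) (localNeg f z) ∧ IsEven C := by
  induction hd : hammingDist x y using Nat.strong_induction_on generalizing y with
  | _ d ih =>
  by_cases hall : ∀ u, x u ≠ y u → ∃ w, x w ≠ y w ∧ f w (update y u (x u)) ≠ y w
  · have : Nonempty {v // x v ≠ y v} := let ⟨v, hv⟩ := Function.ne_iff.mp hxy; ⟨⟨v, hv⟩⟩
    choose g hg using fun u : {v // x v ≠ y v} => hall u u.2
    refine ⟨y, exists_even_cycle_of_balanced_map Subtype.val Subtype.val_injective
      (fun u => ⟨g u, (hg u).1⟩) y fun u => localArc_of_flip (hfix _ (hg u).1).2 ?_⟩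
    rw [← Bool.eq_not.mpr u.2]
    exact Bool.eq_not.mpr (hg u).2
  · push Not at hall
    obtain ⟨u, hu, hstay⟩ := hall
    refine ih _ ?_ (y := update y u (x u)) ?_ (fun v hv => ?_) rfl
    · rw [← hd, hammingDist_comm, hammingDist_comm x]
      exact hammingDist_update_lt (Ne.symm hu)
    · intro h
      have := hstay u hu
      rw [← h] at this
      exact hu ((hfix u hu).1.symm.trans this)
    · have hvu : v ≠ u := by rintro rfl; simp at hv
      rw [update_of_ne hvu] at hv ⊢
      exact ⟨(hfix v hv).1, hstay v hv⟩

end BooleanNetwork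

theorem stmt_14 {V : Type*} [Fintype V] [DecidableEq V]
    (f : V → (V → Bool) → Bool)
    (hloc : ∀ x : V → Bool, ¬ ∃ C : CycleData V,
      IsCycleIn C (localPos f x) (localNeg f x) ∧ IsEven C) :
    ∃! A : Set (V → Bool), Attractor (astg f) A := by
  obtain ⟨A, hA⟩ := exists_attractor (astg f)
  refine ⟨A, hA, fun B hB => hB.eq_of_inter_nonempty hA ?_⟩
  refine Set.not_disjoint_iff_nonempty_inter.mp fun hdisj => ?_
  obtain ⟨x, -, y, -, hxy, hfix⟩ := exists_fixed_on_diff_of_disjoint hB.1 hA.1 hdisj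
  obtain ⟨z, hz⟩ := exists_even_localCycle_of_fixed_on_diff hxy hfix
  exact hloc z hz
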